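/- arXiv:1909.05243 — 3 statements merged into one kernel-verified Lean document; each statement's English description precedes it below -/
import Mathlib

section
/- Perfectness of Shamir's scheme: for any t-1 distinct nonzero evaluation points x_1,...,x_{t-1} in a finite field F and any prescribed share values y_1,...,y_{t-1}, and for every candidate secret S in F, there exists exactly one polynomial f of degree at most t-1 with f(0) = S and f(x_i) = y_i for all i. Consequently, when the coefficients a_1,...,a_{t-1} are chosen uniformly at random, the conditional distribution of the secret given any t-1 shares is uniform on F. -/
open Polynomial Finset

/-- Perfectness of Shamir's scheme: for any `t-1` shares at distinct nonzero points and
any candidate secret `S`, there is exactly one polynomial of degree at most `t-1` with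
constant term `S` and matching the shares; hence each candidate secret is consistent with
the shares in the same number of ways (the conditional distribution of the secret is
uniform). -/
theorem shamir_perfect
    (F : Type*) [Field F] [Fintype F] (t : ℕ) (ht : 1 ≤ t)
    (x : Fin (t - 1) → F) (hinj : Function.Injective x) (hx0 : ∀ i, x i ≠ 0)
    (y : Fin (t - 1) → F) :
    (∀ S : F, ∃! f : F[X],
        f.degree < (t : ℕ) ∧ f.eval 0 = S ∧ ∀ i, f.eval (x i) = y i) ∧
    (∀ S₁ S₂ : F,
      Nat.card {f : F[X] //
          f.degree < (t : ℕ) ∧ f.eval 0 = S₁ ∧ ∀ i, f.eval (x i) = y i} =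
      Nat.card {f : F[X] //
          f.degree < (t : ℕ) ∧ f.eval 0 = S₂ ∧ ∀ i, f.eval (x i) = y i}) := by
  classical
  have key : ∀ S : F, ∃! f : F[X],
      f.degree < (t : ℕ) ∧ f.eval 0 = S ∧ ∀ i, f.eval (x i) = y i := by
    intro S
    set s : Finset F := insert 0 (Finset.image x Finset.univ) with hs
    have h0 : (0:F) ∉ Finset.image x Finset.univ := by
      simp only [Finset.mem_image, Finset.mem_univ, true_and, not_exists]
      exact fun i => hx0 i
    have hcard : s.card = t := by
      rw [hs, Finset.card_insert_of_notMem h0, Finset.card_image_of_injective _ hinj,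
        Finset.card_univ, Fintype.card_fin]
      omega
    set r : F → F := fun z => if h : ∃ i, x i = z then y h.choose else S with hr
    have hr0 : r 0 = S := by
      rw [hr]; dsimp only
      rw [dif_neg]; push_neg; exact fun i => hx0 i
    have hrx : ∀ i, r (x i) = y i := by
      intro i
      have h : ∃ j, x j = x i := ⟨i, rfl⟩
      rw [hr]; dsimp only
      rw [dif_pos h]
      congr 1
      exact hinj h.choose_spec
    have hvs : Set.InjOn (id : F → F) s := Set.injOn_id _
    have h0s : (0:F) ∈ s := Finset.mem_insert_self _ _
    have hxs : ∀ i, x i ∈ s := fun i =>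
      Finset.mem_insert_of_mem (Finset.mem_image_of_mem x (Finset.mem_univ i))
    refine ⟨Lagrange.interpolate s id r, ⟨?_, ?_, ?_⟩, ?_⟩
    · have := Lagrange.degree_interpolate_lt (v := id) r hvs
      rwa [hcard] at this
    · have := Lagrange.eval_interpolate_at_node (v := id) r hvs h0s
      simpa [hr0] using this
    · intro i
      have := Lagrange.eval_interpolate_at_node (v := id) r hvs (hxs i)
      simpa [hrx i] using this
    · rintro g ⟨hdeg, hg0, hgx⟩
      refine Lagrange.eq_interpolate_of_eval_eq (v := id) r hvs (by rwa [hcard]) ?_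
      intro z hz
      rcases Finset.mem_insert.mp hz with rfl | hz
      · simpa [hr0] using hg0
      · rcases Finset.mem_image.mp hz with ⟨i, -, rfl⟩
        simpa [hrx i] using hgx i
  refine ⟨key, fun S₁ S₂ => ?_⟩
  have hone : ∀ S : F, Nat.card {f : F[X] //
      f.degree < (t : ℕ) ∧ f.eval 0 = S ∧ ∀ i, f.eval (x i) = y i} = 1 := by
    intro S
    obtain ⟨f, hf, hu⟩ := key S
    rw [Nat.card_eq_one_iff_exists]
    exact ⟨⟨f, hf⟩, fun g => Subtype.ext (hu g.1 g.2)⟩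
  rw [hone S₁, hone S₂]
end

section
/- Combined scheme correctness: let F be a finite field, R_1,...,R_r \in F crucial shares, S' = S + \sum R_i, and f a polynomial of degree at most t-r-1 with f(0) = S'. Then t-r shares (x_i, f(x_i)) at distinct nonzero points together with all crucial shares recover S via S = \sum_{i=1}^{t-r} f(x_i) \prod_{j \ne i} (-x_j)/(x_i - x_j) - \sum_{k=1}^r R_k. -/
open Polynomial Finset

/-- Combined scheme correctness: with `r` crucial shares, masked secret
`S' = S + ∑ Rᵢ` as constant term of a polynomial of degree at most `t-r-1`, the
secret is recovered from `t-r` normal shares at distinct nonzero points and all crucial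
shares via Lagrange interpolation minus the sum of crucial shares. -/
theorem combined_scheme_correctness
    (F : Type*) [Field F] [Fintype F] (t r : ℕ) (hrt : r < t)
    (S : F) (R : Fin r → F)
    (f : F[X]) (hdeg : f.degree < ((t - r : ℕ) : WithBot ℕ))
    (hmask : f.eval 0 = S + ∑ i, R i)
    (x : Fin (t - r) → F) (hinj : Function.Injective x) (hx0 : ∀ i, x i ≠ 0) :
    S = (∑ i : Fin (t - r),
          f.eval (x i) * ∏ j ∈ Finset.univ.erase i, (-(x j)) / (x i - x j))
        - ∑ k, R k := by
  have hvs : Set.InjOn x (Finset.univ : Finset (Fin (t - r))) := hinj.injOn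
  have hcard : f.degree < (#(Finset.univ : Finset (Fin (t - r))) : WithBot ℕ) := by
    simpa using hdeg
  have hf := Lagrange.eq_interpolate hvs hcard
  have h0 : f.eval 0 = ∑ i : Fin (t - r),
      f.eval (x i) * ∏ j ∈ Finset.univ.erase i, (-(x j)) / (x i - x j) := by
    conv_lhs => rw [hf]
    rw [Lagrange.interpolate_apply, eval_finset_sum]
    refine Finset.sum_congr rfl fun i _ => ?_
    rw [eval_mul, eval_C, Lagrange.basis, eval_prod]
    congr 1
    refine Finset.prod_congr rfl fun j _ => ?_
    simp [Lagrange.basisDivisor, div_eq_inv_mul]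
  rw [← h0, hmask]
  ring
end

section
/- Compartmented scheme correctness: let F be a finite field, f an outer polynomial of degree at most t-1 with f(0) = S, and for each compartment i let g_i be an inner polynomial of degree at most t_i - 1 with g_i(0) = f(x_i). If in each of t compartments i_1,...,i_t the users supply t_{i_k} shares (evaluations of g_{i_k} at distinct nonzero points), then S can be computed by first Lagrange-interpolating each g_{i_k} at 0 and then Lagrange-interpolating f at 0. -/
open Polynomial Finset

lemma lagrange_eval_zero {F : Type*} [Field F] {n : ℕ} (p : F[X])
    (hp : p.degree < (n : WithBot ℕ)) (v : Fin n → F) (hv : Function.Injective v) :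
    p.eval 0 = ∑ i : Fin n,
      p.eval (v i) * ∏ j ∈ Finset.univ.erase i, (-(v j)) / (v i - v j) := by
  have hinj : Set.InjOn v (Finset.univ : Finset (Fin n)) := hv.injOn
  have h := Lagrange.eq_interpolate (s := Finset.univ) (v := v) (f := p) hinj
    (by simpa using hp)
  conv_lhs => rw [h]
  rw [Lagrange.interpolate_apply, eval_finset_sum]
  refine Finset.sum_congr rfl fun i _ => ?_
  rw [eval_mul, eval_C, Lagrange.basis, eval_prod]
  congr 1
  refine Finset.prod_congr rfl fun j hj => ?_
  have hij : v i - v j ≠ 0 := sub_ne_zero.mpr (fun h => (mem_erase.mp hj).1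
    (hv h).symm)
  simp [Lagrange.basisDivisor, div_eq_inv_mul, zero_sub]

/-- Correctness of Simmons' compartmented scheme: the outer polynomial `f` has
`f(0) = S` and degree at most `t-1`; compartment `k` redistributes its share `f(x k)` as
the constant term of an inner polynomial `g k` of degree at most `tc k - 1`. Supplying
`tc k` inner shares in each of `t` compartments recovers `S` by nested Lagrange
interpolation. -/
theorem compartmented_scheme_correctness
    (F : Type*) [Field F] [Fintype F] (t : ℕ)
    (S : F) (f : F[X]) (hdeg : f.degree < (t : ℕ)) (hS : f.eval 0 = S)
    (x : Fin t → F) (hinj : Function.Injective x) (hx0 : ∀ i, x i ≠ 0)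
    (tc : Fin t → ℕ) (g : Fin t → F[X])
    (hgdeg : ∀ k, (g k).degree < ((tc k : ℕ) : WithBot ℕ))
    (hg0 : ∀ k, (g k).eval 0 = f.eval (x k))
    (z : (k : Fin t) → Fin (tc k) → F)
    (hzinj : ∀ k, Function.Injective (z k)) (hz0 : ∀ k i, z k i ≠ 0) :
    S = ∑ k : Fin t,
        (∑ i : Fin (tc k),
            (g k).eval (z k i) * ∏ j ∈ Finset.univ.erase i, (-(z k j)) / (z k i - z k j))
        * ∏ l ∈ Finset.univ.erase k, (-(x l)) / (x k - x l) := by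
  have houter := lagrange_eval_zero f hdeg x hinj
  rw [hS] at houter
  rw [houter]
  refine Finset.sum_congr rfl fun k _ => ?_
  congr 1
  rw [← hg0 k]
  exact lagrange_eval_zero (g k) (hgdeg k) (z k) (hzinj k)
end
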